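/- For a logic program with preferences (P,<) where P is stratified (has no default-negation cycles, i.e., admits a stratification), the preferred answer sets under semantics G coincide exactly with the answer sets of P. -/

import Mathlib

/-- A literal over atoms `A`: `(true, a)` is the atom `a`, `(false, a)` is `¬ a`. -/
abbrev Lit (A : Type) := Bool × A

/-- A rule with head, positive body and negative body. -/
structure Rule (A : Type) where
  head : Lit A
  pos : Set (Lit A)
  neg : Set (Lit A)

variable {A : Type}

/-- Heads of a set of rules. -/
def headSet (R : Set (Rule A)) : Set (Lit A) := Rule.head '' R

/-- `R ⊆ P` positively satisfies `P`. -/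
def PosSat (P R : Set (Rule A)) : Prop :=
  R ⊆ P ∧ ∀ r ∈ P, r.pos ⊆ headSet R → r ∈ R

/-- The minimal set of rules positively satisfying `P`. -/
def MP (P : Set (Rule A)) : Set (Rule A) := ⋂₀ {R | PosSat P R}

/-- A set of rules defeats a rule. -/
def defeatsRule (R : Set (Rule A)) (r : Rule A) : Prop :=
  (headSet R ∩ r.neg).Nonempty

/-- A set of rules defeats a set of rules. -/
def defeatsSet (R₁ R₂ : Set (Rule A)) : Prop := ∃ r ∈ R₂, defeatsRule R₁ r

/-- The reduct `P^R` removes each rule defeated by `R`. -/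
def reduct (P R : Set (Rule A)) : Set (Rule A) := {r ∈ P | ¬ defeatsRule R r}

/-- `R ⊆ P` is a generating set of `P` iff `R = MP (P^R)`. -/
def GenSet (P R : Set (Rule A)) : Prop := R ⊆ P ∧ R = MP (reduct P R)

/-- A set of literals is consistent iff it contains no complementary pair. -/
def Consistent (S : Set (Lit A)) : Prop :=
  ∀ a : A, ¬ (((true, a) ∈ S) ∧ ((false, a) ∈ S))

/-- Answer sets via generating sets. -/
def AnswerSet (P : Set (Rule A)) (S : Set (Lit A)) : Prop :=
  Consistent S ∧ ∃ R, GenSet P R ∧ headSet R = S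

/-- `Γ_S(P)`: rules whose positive body is in `S` and negative body disjoint from `S`. -/
def Gamma (S : Set (Lit A)) (P : Set (Rule A)) : Set (Rule A) :=
  {r ∈ P | r.pos ⊆ S ∧ r.neg ∩ S = ∅}

/-- Fragments of a program. -/
def Frag (P : Set (Rule A)) : Set (Set (Rule A)) := {R | R ⊆ P ∧ MP R = R}

/-- Fragment reduct: remove fragments defeated by a member of `E`. -/
def fragReduct (P : Set (Rule A)) (E : Set (Set (Rule A))) : Set (Set (Rule A)) :=
  {X ∈ Frag P | ¬ ∃ Y ∈ E, defeatsSet Y X}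

/-- Stable fragment sets. -/
def StableFragSet (P : Set (Rule A)) (E : Set (Set (Rule A))) : Prop :=
  E ⊆ Frag P ∧ fragReduct P E = E

/-- Mutually defeating (conflicting) sets of rules. -/
def Conflicting (X Y : Set (Rule A)) : Prop := defeatsSet X Y ∧ defeatsSet Y X

/-- `X` overrides `Y` w.r.t. the preference relation `lt`. -/
def Overrides (lt : Rule A → Rule A → Prop) (X Y : Set (Rule A)) : Prop :=
  Conflicting X Y ∧
    ∀ r₁ ∈ X, defeatsRule Y r₁ → ∃ r₂ ∈ Y, defeatsRule X r₂ ∧ lt r₂ r₁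

/-- Preferred fragment reduct (semantics G). -/
def prefFragReduct (lt : Rule A → Rule A → Prop) (P : Set (Rule A))
    (E : Set (Set (Rule A))) : Set (Set (Rule A)) :=
  {X ∈ Frag P | ¬ ∃ Y ∈ E, defeatsSet Y X ∧ ¬ Overrides lt X Y}

/-- Preferred stable fragment sets (semantics G). -/
def PrefStableFragSet (lt : Rule A → Rule A → Prop) (P : Set (Rule A))
    (E : Set (Set (Rule A))) : Prop :=
  E ⊆ Frag P ∧ prefFragReduct lt P E = E

/-- Preferred answer sets under the fragment-based semantics G. -/
def GPrefAnswerSet (lt : Rule A → Rule A → Prop) (P : Set (Rule A))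
    (S : Set (Lit A)) : Prop :=
  Consistent S ∧ ∃ E, PrefStableFragSet lt P E ∧ headSet (⋃₀ E) = S

/-- `T(r,R)` for semantics GNO. -/
def Trules (lt : Rule A → Rule A → Prop) (r : Rule A) (R : Set (Rule A)) :
    Set (Rule A) :=
  MP {p ∈ R | ¬ lt p r}

/-- GNO reduct: remove rules `r` with `body⁻(r) ∩ head(T(r,R)) ≠ ∅`. -/
def gnoReduct (lt : Rule A → Rule A → Prop) (P R : Set (Rule A)) : Set (Rule A) :=
  {r ∈ P | ¬ (r.neg ∩ headSet (Trules lt r R)).Nonempty}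

/-- GNO-preferred generating sets. -/
def GNOPrefGen (lt : Rule A → Rule A → Prop) (P R : Set (Rule A)) : Prop :=
  GenSet P R ∧ R = MP (gnoReduct lt P R)

/-- GNO-preferred answer sets. -/
def GNOPrefAnswerSet (lt : Rule A → Rule A → Prop) (P : Set (Rule A))
    (S : Set (Lit A)) : Prop :=
  Consistent S ∧ ∃ R, GNOPrefGen lt P R ∧ headSet R = S

/-- A rule defeats a rule. -/
def defeats (r₁ r₂ : Rule A) : Prop := r₁.head ∈ r₂.neg

/-- `r₁` directly overrides `r₂` w.r.t. `lt`. -/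
def DirOverrides (lt : Rule A → Rule A → Prop) (r₁ r₂ : Rule A) : Prop :=
  (defeats r₁ r₂ ∧ defeats r₂ r₁) ∧ lt r₂ r₁

/-- D-reduct for the direct-conflict semantics. -/
def dReduct (lt : Rule A → Rule A → Prop) (P R : Set (Rule A)) : Set (Rule A) :=
  {r₁ ∈ P | ¬ ∃ r₂ ∈ R, defeats r₂ r₁ ∧ ¬ DirOverrides lt r₁ r₂}

/-- D-preferred generating sets. -/
def DPrefGen (lt : Rule A → Rule A → Prop) (P R : Set (Rule A)) : Prop :=
  R = MP (dReduct lt P R)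

/-- D-preferred answer sets. -/
def DPrefAnswerSet (lt : Rule A → Rule A → Prop) (P : Set (Rule A))
    (S : Set (Lit A)) : Prop :=
  Consistent S ∧ ∃ R, DPrefGen lt P R ∧ headSet R = S

/-- Stratified programs. -/
def Stratified (P : Set (Rule A)) : Prop :=
  ∃ lam : Lit A → ℕ, ∀ r ∈ P,
    (∀ l ∈ r.pos, lam l ≤ lam r.head) ∧ (∀ l ∈ r.neg, lam l < lam r.head)

/-!
For an answer set with generating set `R`, take `E` to be the fragments contained in `R`. Since `R`
defeats none of its own rules, no member of `E` defeats a member of `E`. A fragment `X ⊄ R` is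
defeated by the part of `R` below the least stratum `k` at which `X \ R` has a rule defeated by
`R`; this part cannot defeat `X` back, because it only blocks literals of stratum `< k`, which `X`
derives inside `R`. So `X` does not override it, and the preferences play no role.

Conversely, in a preferred stable fragment set `E` two members defeating each other would have
to override each other, which is impossible for a strict order on finitely many rules: a
`lt`-minimal defeated rule has no strictly preferred defeated rule on the other side. Hence `⋃₀ E`
is not defeated by itself, and it is the generating set of `head (⋃₀ E)`.
-/

theorem headSet_mono {R S : Set (Rule A)} (h : R ⊆ S) : headSet R ⊆ headSet S :=
  Set.image_mono h

section MP

variable {P R : Set (Rule A)}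

theorem posSat_self (P : Set (Rule A)) : PosSat P P := ⟨subset_rfl, fun _ hr _ => hr⟩

theorem MP_subset_of_posSat (h : PosSat P R) : MP P ⊆ R := Set.sInter_subset_of_mem h

theorem MP_subset_self (P : Set (Rule A)) : MP P ⊆ P := MP_subset_of_posSat (posSat_self P)

theorem posSat_MP (P : Set (Rule A)) : PosSat P (MP P) :=
  ⟨MP_subset_self P, fun r hr hpos _ hR =>
    hR.2 r hr (hpos.trans (headSet_mono (Set.sInter_subset_of_mem hR)))⟩

theorem MP_MP (P : Set (Rule A)) : MP (MP P) = MP P := by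
  refine (MP_subset_self _).antisymm (MP_subset_of_posSat ⟨(MP_subset_self _).trans
    (MP_subset_self P), fun r hr hpos => ?_⟩)
  have hr' : r ∈ MP P :=
    (posSat_MP P).2 r hr (hpos.trans (headSet_mono (MP_subset_self (MP P))))
  exact (posSat_MP (MP P)).2 r hr' hpos

theorem subset_MP_of_MP_eq (hR : MP R = R) (hRP : R ⊆ P) : R ⊆ MP P := by
  have hsat : PosSat R (R ∩ MP P) :=
    ⟨Set.inter_subset_left, fun r hr hpos => ⟨hr, (posSat_MP P).2 r (hRP hr)
      (hpos.trans (headSet_mono Set.inter_subset_right))⟩⟩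
  have := MP_subset_of_posSat hsat
  rw [hR] at this
  exact fun r hr => (this hr).2

end MP

namespace GenSet

variable {P R : Set (Rule A)}

theorem MP_eq (hR : GenSet P R) : MP R = R := by
  have := MP_MP (reduct P R)
  rwa [← hR.2] at this

theorem mem_frag (hR : GenSet P R) : R ∈ Frag P := ⟨hR.1, hR.MP_eq⟩

theorem not_defeatsRule (hR : GenSet P R) {r : Rule A} (hr : r ∈ R) : ¬ defeatsRule R r := by
  have := MP_subset_self (reduct P R)
  rw [← hR.2] at this
  exact (this hr).2

end GenSet

section Preference

variable {lt : Rule A → Rule A → Prop} [IsStrictOrder (Rule A) lt]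

theorem Overrides.not_overrides {X Y : Set (Rule A)} (hX : X.Finite) (hY : Y.Finite)
    (hXY : Overrides lt X Y) : ¬ Overrides lt Y X := by
  intro hYX
  set D : Set (Rule A) := {r ∈ X | defeatsRule Y r} ∪ {r ∈ Y | defeatsRule X r}
  have hD : D.Finite := (hX.subset fun _ h => h.1).union (hY.subset fun _ h => h.1)
  obtain ⟨r, hrX, hdef⟩ := hXY.1.2
  obtain ⟨m, hmD, hmin⟩ := (Set.wellFoundedOn_iff.1 (hD.wellFoundedOn (r := lt))).has_min D
    ⟨r, .inl ⟨hrX, hdef⟩⟩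
  have hmin' : ∀ x ∈ D, ¬ lt x m := fun x hx hlt => hmin x hx ⟨hlt, hx, hmD⟩
  rcases hmD with ⟨hmX, hm⟩ | ⟨hmY, hm⟩
  · obtain ⟨r₂, hr₂Y, hr₂, hlt⟩ := hXY.2 m hmX hm
    exact hmin' r₂ (.inr ⟨hr₂Y, hr₂⟩) hlt
  · obtain ⟨r₂, hr₂X, hr₂, hlt⟩ := hYX.2 m hmY hm
    exact hmin' r₂ (.inl ⟨hr₂X, hr₂⟩) hlt

namespace PrefStableFragSet

variable {P : Set (Rule A)} {E : Set (Set (Rule A))}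

theorem not_defeatsSet (hP : P.Finite) (hE : PrefStableFragSet lt P E) {X Y : Set (Rule A)}
    (hX : X ∈ E) (hY : Y ∈ E) : ¬ defeatsSet Y X := by
  intro hYX
  have hXY : Overrides lt X Y := by_contra fun h => (hE.2.superset hX).2 ⟨Y, hY, hYX, h⟩
  have hYX' : Overrides lt Y X :=
    by_contra fun h => (hE.2.superset hY).2 ⟨X, hX, hXY.1.1, h⟩
  exact hXY.not_overrides (hP.subset (hE.1 hX).1) (hP.subset (hE.1 hY).1) hYX'

theorem sUnion_subset_reduct (hP : P.Finite) (hE : PrefStableFragSet lt P E) :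
    ⋃₀ E ⊆ reduct P (⋃₀ E) := by
  rintro r ⟨X, hX, hrX⟩
  refine ⟨(hE.1 hX).1 hrX, ?_⟩
  rintro ⟨_, ⟨q, ⟨Y, hY, hqY⟩, rfl⟩, hneg⟩
  exact hE.not_defeatsSet hP hX hY ⟨r, hrX, q.head, ⟨q, hqY, rfl⟩, hneg⟩

theorem genSet_sUnion (hP : P.Finite) (hE : PrefStableFragSet lt P E) : GenSet P (⋃₀ E) := by
  have hred := hE.sUnion_subset_reduct hP
  refine ⟨Set.sUnion_subset fun X hX => (hE.1 hX).1, ?_⟩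
  refine Set.Subset.antisymm (Set.sUnion_subset fun X hX =>
    subset_MP_of_MP_eq (hE.1 hX).2 ((Set.subset_sUnion_of_mem hX).trans hred)) ?_
  -- `MP (reduct P (⋃₀ E))` is a fragment that no member of `E` defeats, hence itself in `E`.
  have hfrag : MP (reduct P (⋃₀ E)) ∈ Frag P :=
    ⟨(MP_subset_self _).trans fun _ hr => hr.1, MP_MP _⟩
  refine Set.subset_sUnion_of_mem (hE.2.subset ⟨hfrag, ?_⟩)
  rintro ⟨Y, hY, ⟨q, hq, l, hlY, hneg⟩, -⟩
  exact (MP_subset_self _ hq).2 ⟨l, headSet_mono (Set.subset_sUnion_of_mem hY) hlY, hneg⟩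

end PrefStableFragSet

end Preference

section Stratification

variable {lam : Lit A → ℕ}

theorem MP_sep_head_lt {R : Set (Rule A)} (hR : MP R = R)
    (hpos : ∀ r ∈ R, ∀ l ∈ r.pos, lam l ≤ lam r.head) (k : ℕ) :
    MP {q ∈ R | lam q.head < k} = {q ∈ R | lam q.head < k} := by
  set Y := {q ∈ R | lam q.head < k}
  refine (MP_subset_self Y).antisymm ?_
  have hsat : PosSat R (MP Y ∪ (R \ Y)) := by
    refine ⟨Set.union_subset ((MP_subset_self Y).trans fun _ hq => hq.1) Set.sdiff_subset,
      fun r hr hr_pos => ?_⟩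
    by_cases hrk : lam r.head < k
    · refine .inl ((posSat_MP Y).2 r ⟨hr, hrk⟩ fun l hl => ?_)
      obtain ⟨q, hq | hq, rfl⟩ := hr_pos hl
      · exact ⟨q, hq, rfl⟩
      · exact absurd ⟨hq.1, (hpos r hr _ hl).trans_lt hrk⟩ hq.2
    · exact .inr ⟨hr, fun h => hrk h.2⟩
  have := MP_subset_of_posSat hsat
  rw [hR] at this
  exact fun q hq => (this hq.1).resolve_right fun h => h.2 hq

namespace GenSet

variable {P R X : Set (Rule A)}

theorem lt_of_not_defeatsRule (hR : GenSet P R) (hX : X ∈ Frag P)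
    (hpos : ∀ r ∈ X, ∀ l ∈ r.pos, lam l ≤ lam r.head) {k : ℕ}
    (hk : ∀ s ∈ X \ R, k ≤ lam s.head)
    (hnd : ∀ s ∈ X \ R, lam s.head = k → ¬ defeatsRule R s) :
    ∀ s ∈ X \ R, k < lam s.head := by
  have hsat : PosSat X {s ∈ X | s ∈ R ∨ k < lam s.head} := by
    refine ⟨fun _ hs => hs.1, fun t ht ht_pos => ⟨ht, ?_⟩⟩
    by_contra! h
    obtain ⟨htR, htk⟩ := h
    have ht_posR : t.pos ⊆ headSet (MP (reduct P R)) := by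
      rw [← hR.2]
      intro l hl
      obtain ⟨q, ⟨-, hqR | hqk⟩, rfl⟩ := ht_pos hl
      · exact ⟨q, hqR, rfl⟩
      · exact absurd ((hpos t ht _ hl).trans htk) hqk.not_ge
    apply htR
    rw [hR.2]
    exact (posSat_MP _).2 t ⟨hX.1 ht, hnd t ⟨ht, htR⟩ (htk.antisymm (hk t ⟨ht, htR⟩))⟩ ht_posR
  have := MP_subset_of_posSat hsat
  rw [hX.2] at this
  exact fun s hs => (this hs.1).2.resolve_left hs.2

theorem exists_frag_defeatsSet (hR : GenSet P R)
    (hlam : ∀ r ∈ P, (∀ l ∈ r.pos, lam l ≤ lam r.head) ∧ (∀ l ∈ r.neg, lam l < lam r.head))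
    (hX : X ∈ Frag P) (hXR : ¬ X ⊆ R) :
    ∃ Y ∈ Frag P, Y ⊆ R ∧ defeatsSet Y X ∧ ¬ defeatsSet X Y := by
  obtain ⟨m, hm, hmin⟩ :=
    (measure fun r : Rule A => lam r.head).wf.has_min (X \ R) (Set.sdiff_nonempty.2 hXR)
  set k := lam m.head
  have hk : ∀ s ∈ X \ R, k ≤ lam s.head := fun s hs => le_of_not_gt (hmin s hs)
  obtain ⟨r, hr, hrk, _, ⟨q, hqR, rfl⟩, hneg⟩ :
      ∃ r ∈ X \ R, lam r.head = k ∧ defeatsRule R r := by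
    by_contra! h
    exact lt_irrefl k
      (hR.lt_of_not_defeatsRule hX (fun r hr => (hlam r (hX.1 hr)).1) hk h m hm)
  have hqk : lam q.head < k := hrk ▸ (hlam r (hX.1 hr.1)).2 _ hneg
  refine ⟨{q ∈ R | lam q.head < k}, ⟨fun q hq => hR.1 hq.1,
    MP_sep_head_lt hR.MP_eq (fun r hr => (hlam r (hR.1 hr)).1) k⟩, fun q hq => hq.1,
    ⟨r, hr.1, q.head, ⟨q, ⟨hqR, hqk⟩, rfl⟩, hneg⟩, ?_⟩
  -- `X` can only defeat `Y` through a rule outside `R`, whose head lies in a stratum `≥ k`.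
  rintro ⟨p, ⟨hpR, hpk⟩, _, ⟨s, hsX, rfl⟩, hneg'⟩
  by_cases hsR : s ∈ R
  · exact hR.not_defeatsRule hpR ⟨s.head, ⟨s, hsR, rfl⟩, hneg'⟩
  · have hsp := (hlam p (hR.1 hpR)).2 _ hneg'
    have hks := hk s ⟨hsX, hsR⟩
    omega

theorem prefStableFragSet (hR : GenSet P R) (hstrat : Stratified P)
    (lt : Rule A → Rule A → Prop) : PrefStableFragSet lt P {X ∈ Frag P | X ⊆ R} := by
  obtain ⟨lam, hlam⟩ := hstrat
  refine ⟨fun X hX => hX.1, Set.Subset.antisymm ?_ ?_⟩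
  · rintro X ⟨hX, hnd⟩
    refine ⟨hX, by_contra fun hXR => ?_⟩
    obtain ⟨Y, hY, hYR, hYX, hXY⟩ := hR.exists_frag_defeatsSet hlam hX hXR
    exact hnd ⟨Y, ⟨hY, hYR⟩, hYX, fun h => hXY h.1.1⟩
  · rintro X ⟨hX, hXR⟩
    refine ⟨hX, ?_⟩
    rintro ⟨Y, ⟨-, hYR⟩, ⟨r, hr, l, hl, hneg⟩, -⟩
    exact hR.not_defeatsRule (hXR hr) ⟨l, headSet_mono hYR hl, hneg⟩

theorem sUnion_frag_subset_eq (hR : GenSet P R) : ⋃₀ {X ∈ Frag P | X ⊆ R} = R :=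
  (Set.sUnion_subset fun _ hX => hX.2).antisymm
    (Set.subset_sUnion_of_mem ⟨hR.mem_frag, subset_rfl⟩)

end GenSet

end Stratification

/-- on stratified programs, semantics G coincides with the answer
set semantics. -/
theorem gPref_stratified_eq_answerSet (P : Set (Rule A)) (hP : P.Finite)
    (hstrat : Stratified P)
    (lt : Rule A → Rule A → Prop) (htrans : Transitive lt)
    (hasymm : ∀ r₁ r₂, lt r₁ r₂ → ¬ lt r₂ r₁)
    (S : Set (Lit A)) :
    GPrefAnswerSet lt P S ↔ AnswerSet P S := by
  have : IsStrictOrder (Rule A) lt :=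
    { trans := fun _ _ _ => @htrans _ _ _, irrefl := fun r h => hasymm r r h h }
  constructor
  · rintro ⟨hcons, E, hE, rfl⟩
    exact ⟨hcons, ⋃₀ E, hE.genSet_sUnion hP, rfl⟩
  · rintro ⟨hcons, R, hR, rfl⟩
    exact ⟨hcons, _, hR.prefStableFragSet hstrat lt, by rw [hR.sUnion_frag_subset_eq]⟩
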